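/- Conditional pseudo-population factorization for partial stabilized weights (equation (B.4.1)): Assume (A2) and (A3). Then for every b̄ ∈ {0,1}^{K−m} with P(Ā(K−m−1)=b̄) > 0, every a̲, b̲ ∈ {0,1}^m, and every Borel set B ⊆ ℝ, writing ā = (b̄, a̲) ∈ {0,1}^K: 𝔼[W_psw^(m) · 1{Y^{ā} ∈ B} · 1{A̲(K−m) = b̲} · 1{Ā(K−m−1) = b̄}] = P(Y^{ā} ∈ B | Ā(K−m−1) = b̄) · P(A̲(K−m) = b̲ | Ā(K−m−1) = b̄) · P(Ā(K−m−1) = b̄). That is, after weighting by W_psw^(m), the potential outcome Y^{ā} and the recent treatment history A̲(K−m) are conditionally independent given the past treatment history Ā(K−m−1), with the original conditional marginal distributions. -/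

import Mathlib

open MeasureTheory Finset
open scoped Classical

namespace MSMPaper

noncomputable section

variable {Ω : Type*} [MeasurableSpace Ω] {𝓛 : Type*}

/-- Conditional probability `P(E | F) = P(E ∩ F) / P(F)` as a real number
(junk value `0` when `P F = 0`). -/
def cP (P : Measure Ω) (E F : Set Ω) : ℝ := (P (E ∩ F)).toReal / (P F).toReal

variable {K : ℕ}

/-- Event `Ā(t−1) = b̄` (treatment history up to, not including, time `t`). -/
def Apast (A : Fin K → Ω → Bool) (t : ℕ) (b : Fin K → Bool) : Set Ω :=
  {ω | ∀ k : Fin K, (k : ℕ) < t → A k ω = b k}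

/-- Event `L̄(t) = l̄` (covariate history up to and including time `t`). -/
def Lpast (L : Fin K → Ω → 𝓛) (t : ℕ) (l : Fin K → 𝓛) : Set Ω :=
  {ω | ∀ k : Fin K, (k : ℕ) ≤ t → L k ω = l k}

/-- Event `A̲(s, t−1) = b` (treatment history from time `s` up to, not including, `t`). -/
def Aseg (A : Fin K → Ω → Bool) (s t : ℕ) (b : Fin K → Bool) : Set Ω :=
  {ω | ∀ k : Fin K, s ≤ (k : ℕ) → (k : ℕ) < t → A k ω = b k}

/-- Event `A̲(K−m) = a̲` for a (last-`m`) treatment vector `as`. -/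
def EtrV (A : Fin K → Ω → Bool) (m : ℕ) (as : Fin K → Bool) : Set Ω :=
  {ω | ∀ k : Fin K, K - m ≤ (k : ℕ) → A k ω = as k}

/-- Event `A̲(K−m) = a_m` (constant `a` on the last `m` coordinates). -/
def Etr (A : Fin K → Ω → Bool) (m : ℕ) (a : Bool) : Set Ω :=
  EtrV A m (fun _ => a)

/-- Stabilized weights `W_sw`. -/
def Wsw (P : Measure Ω) (A : Fin K → Ω → Bool) (L : Fin K → Ω → 𝓛) : Ω → ℝ :=
  fun ω => ∏ k : Fin K,
    cP P {ω' | A k ω' = A k ω} (Apast A (k : ℕ) (fun j => A j ω)) /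
      cP P {ω' | A k ω' = A k ω}
        (Lpast L (k : ℕ) (fun j => L j ω) ∩ Apast A (k : ℕ) (fun j => A j ω))

/-- Restricted stabilized weights `W_rsw^(m)`. -/
def Wrsw (P : Measure Ω) (A : Fin K → Ω → Bool) (L : Fin K → Ω → 𝓛) (m : ℕ) : Ω → ℝ :=
  fun ω => ∏ k ∈ Finset.univ.filter (fun k : Fin K => K - m ≤ (k : ℕ)),
    cP P {ω' | A k ω' = A k ω} (Aseg A (K - m) (k : ℕ) (fun j => A j ω)) /
      cP P {ω' | A k ω' = A k ω}
        (Lpast L (k : ℕ) (fun j => L j ω) ∩ Apast A (k : ℕ) (fun j => A j ω))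

/-- Partial stabilized weights `W_psw^(m)`. -/
def Wpsw (P : Measure Ω) (A : Fin K → Ω → Bool) (L : Fin K → Ω → 𝓛) (m : ℕ) : Ω → ℝ :=
  fun ω => ∏ k ∈ Finset.univ.filter (fun k : Fin K => K - m ≤ (k : ℕ)),
    cP P {ω' | A k ω' = A k ω} (Apast A (k : ℕ) (fun j => A j ω)) /
      cP P {ω' | A k ω' = A k ω}
        (Lpast L (k : ℕ) (fun j => L j ω) ∩ Apast A (k : ℕ) (fun j => A j ω))

/-- IP-weighted contrast `θ_W^(m)`. -/
def θW (P : Measure Ω) (A : Fin K → Ω → Bool) (m : ℕ) (W Y : Ω → ℝ) : ℝ :=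
  (∫ ω in Etr A m true, W ω * Y ω ∂P) / (∫ ω in Etr A m true, W ω ∂P) -
    (∫ ω in Etr A m false, W ω * Y ω ∂P) / (∫ ω in Etr A m false, W ω ∂P)

/-- `rev j` is the time index `K − 1 − j`; the paper's coefficient `ψ_{j+1}`
multiplies `a(K − (j+1)) = a(rev j)`. -/
def rev (j : Fin K) : Fin K := ⟨K - 1 - (j : ℕ), by have := j.isLt; omega⟩

/-- `θ^(K) = 𝔼[Y^{1_K}] − 𝔼[Y^{0_K}]`. -/
def θKfull (P : Measure Ω) (Ypot : (Fin K → Bool) → Ω → ℝ) : ℝ :=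
  (∫ ω, Ypot (fun _ => true) ω ∂P) - ∫ ω, Ypot (fun _ => false) ω ∂P

/-- (A1) consistency. -/
def A1ok (A : Fin K → Ω → Bool) (Y : Ω → ℝ) (Ypot : (Fin K → Bool) → Ω → ℝ) : Prop :=
  ∀ (a : Fin K → Bool) (ω : Ω), (∀ k, A k ω = a k) → Y ω = Ypot a ω

/-- (A2) sequential exchangeability. -/
def A2ok (P : Measure Ω) (A : Fin K → Ω → Bool) (L : Fin K → Ω → 𝓛)
    (Ypot : (Fin K → Bool) → Ω → ℝ) : Prop :=
  ∀ (t : Fin K) (a : Fin K → Bool) (B : Set ℝ), MeasurableSet B →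
    ∀ (av : Bool) (l : Fin K → 𝓛) (b : Fin K → Bool),
      0 < P (Lpast L (t : ℕ) l ∩ Apast A (t : ℕ) b) →
      cP P ({ω | Ypot a ω ∈ B} ∩ {ω | A t ω = av}) (Lpast L (t : ℕ) l ∩ Apast A (t : ℕ) b) =
        cP P {ω | Ypot a ω ∈ B} (Lpast L (t : ℕ) l ∩ Apast A (t : ℕ) b) *
          cP P {ω | A t ω = av} (Lpast L (t : ℕ) l ∩ Apast A (t : ℕ) b)

/-- (A3) positivity. -/
def A3ok (P : Measure Ω) (A : Fin K → Ω → Bool) (L : Fin K → Ω → 𝓛) : Prop :=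
  ∀ (t : Fin K) (av : Bool) (l : Fin K → 𝓛) (b : Fin K → Bool),
    0 < P (Lpast L (t : ℕ) l ∩ Apast A (t : ℕ) b) →
    0 < cP P {ω | A t ω = av} (Lpast L (t : ℕ) l ∩ Apast A (t : ℕ) b)

/-- The marginal structural model `𝔼[Y^{ā}] = ψ₀ + Σ_{j=1}^K ψ_j a(K−j)`;
here `ψ j` is the paper's `ψ_{j+1}`, the coefficient of `a(K−1−j)`. -/
def MSMeq (P : Measure Ω) (Ypot : (Fin K → Bool) → Ω → ℝ) (ψ0 : ℝ) (ψ : Fin K → ℝ) : Prop :=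
  ∀ a : Fin K → Bool,
    (∫ ω, Ypot a ω ∂P) = ψ0 + ∑ j : Fin K, ψ j * (if a (rev j) = true then 1 else 0)

/-- (A5) conditional MSM given the past treatment history `Ā(K−m−1)`. -/
def A5ok (P : Measure Ω) (A : Fin K → Ω → Bool) (Ypot : (Fin K → Bool) → Ω → ℝ)
    (m : ℕ) : Prop :=
  ∀ b : Fin K → Bool, 0 < P (Apast A (K - m) b) →
    ∃ (φ0 : ℝ) (φ : Fin K → ℝ), ∀ a : Fin K → Bool,
      (∫ ω in Apast A (K - m) b, Ypot a ω ∂P) / (P (Apast A (K - m) b)).toReal =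
        φ0 + ∑ j : Fin K, φ j * (if a (rev j) = true then 1 else 0)

/-- `q_{j+1} = P(A(K−1−j)=1 | A̲(K−m)=1_m) − P(A(K−1−j)=1 | A̲(K−m)=0_m)`. -/
def qcoef (P : Measure Ω) (A : Fin K → Ω → Bool) (m : ℕ) (j : Fin K) : ℝ :=
  cP P {ω | A (rev j) ω = true} (Etr A m true) -
    cP P {ω | A (rev j) ω = true} (Etr A m false)

end

noncomputable section

variable {Ω : Type*} [MeasurableSpace Ω] {K : ℕ}

/-- Concatenated regime `(b̄, a̲) ∈ {0,1}^K`: `b̄` on the coordinates before `K−m`,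
`a̲` on the last `m` coordinates. -/
def concatRegime (m : ℕ) (b : {k : Fin K // (k : ℕ) < K - m} → Bool)
    (as : Fin K → Bool) : Fin K → Bool :=
  fun k => if h : (k : ℕ) < K - m then b ⟨k, h⟩ else as k

/-- Event `Ā(K−m−1) = b̄` for a past history `b̄ ∈ {0,1}^{K−m}`. -/
def ApastV (A : Fin K → Ω → Bool) (m : ℕ)
    (b : {k : Fin K // (k : ℕ) < K - m} → Bool) : Set Ω :=
  {ω | ∀ (k : Fin K) (h : (k : ℕ) < K - m), A k ω = b ⟨k, h⟩}

end

/-! On the event `Ā(K−1) = c̄`, `c̄ = (b̄, b̲)`, the numerators of `W_psw^(m)` telescope to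
`P(Ā(K−1) = c̄) / P(Ā(K−m−1) = b̄)`. It remains to show that
`𝔼[1{Y ∈ B} 1{Ā(t−1) = c̄(t−1)} / ∏_{K−m ≤ k < t} P(A(k) = c(k) | L̄(k), Ā(k−1))]`
keeps its value `P(Y ∈ B, Ā(K−m−1) = b̄)` at `t = K−m` as `t` grows to `K`. From `t` to
`t + 1`, split `Ω` along the values of `L̄(t)`: on each atom the earlier weights are constant,
and by sequential exchangeability
`P(Y ∈ B, A(t) = c(t) | atom) = P(Y ∈ B | atom) P(A(t) = c(t) | atom)`, so dividing by the
last propensity (positive by positivity) just removes the event `A(t) = c(t)`. -/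

section General

variable {Ω : Type*} [MeasurableSpace Ω]

theorem cP_mul_toReal (P : Measure Ω) [IsFiniteMeasure P] (E F : Set Ω) :
    cP P E F * (P F).toReal = (P (E ∩ F)).toReal := by
  rcases eq_or_ne (P F) 0 with h | h
  · simp [cP, h, measure_mono_null Set.inter_subset_right h]
  · exact div_mul_cancel₀ _ (ENNReal.toReal_ne_zero.2 ⟨h, measure_ne_top P F⟩)

theorem toReal_measure_inter_div_cP (P : Measure Ω) [IsFiniteMeasure P] {Y E G : Set Ω}
    (hind : 0 < P G → cP P (Y ∩ E) G = cP P Y G * cP P E G)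
    (hpos : 0 < P G → 0 < cP P E G) :
    (P (Y ∩ E ∩ G)).toReal / cP P E G = (P (Y ∩ G)).toReal := by
  rcases eq_zero_or_pos (P G) with h | h
  · simp [measure_mono_null Set.inter_subset_right h]
  · rw [div_eq_iff (hpos h).ne', ← cP_mul_toReal, hind h, ← cP_mul_toReal]
    ring

theorem setIntegral_eq_sum_of_factorsThrough {β : Type*} [Fintype β] [MeasurableSpace β]
    [MeasurableSingletonClass β] (P : Measure Ω) [IsFiniteMeasure P] {g : Ω → β}
    (hg : Measurable g) {F : Ω → ℝ} (hF : Function.FactorsThrough F g) (S : Set Ω) :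
    ∫ ω in S, F ω ∂P = ∑ v, (P (S ∩ g ⁻¹' {v})).toReal * Function.extend g F 0 v := by
  simp_rw [← hF.extend_apply 0]
  rw [← integral_map hg.aemeasurable (Integrable.of_finite).aestronglyMeasurable,
    integral_fintype Integrable.of_finite]
  refine sum_congr rfl fun v _ => ?_
  rw [measureReal_def, Measure.map_apply hg (measurableSet_singleton v),
    Measure.restrict_apply (hg (measurableSet_singleton v)), Set.inter_comm, smul_eq_mul]

end General

section Histories

variable {Ω : Type*} {𝓛 : Type*} {K : ℕ}

theorem Apast_succ (A : Fin K → Ω → Bool) (c : Fin K → Bool) {t : ℕ} (ht : t < K) :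
    Apast A (t + 1) c = {ω | A ⟨t, ht⟩ ω = c ⟨t, ht⟩} ∩ Apast A t c := by
  ext ω
  simp only [Apast, Set.mem_inter_iff, Set.mem_ofPred_eq]
  refine ⟨fun h => ⟨h _ (Nat.lt_succ_self t), fun k hk => h k (by omega)⟩, ?_⟩
  rintro ⟨ht', h⟩ k hk
  rcases Nat.lt_succ_iff_lt_or_eq.1 hk with hk | hk
  · exact h k hk
  · obtain rfl : k = ⟨t, ht⟩ := Fin.ext hk
    exact ht'

theorem Lpast_congr (L : Fin K → Ω → 𝓛) {t : ℕ} {l l' : Fin K → 𝓛}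
    (h : ∀ k : Fin K, (k : ℕ) ≤ t → l k = l' k) : Lpast L t l = Lpast L t l' := by
  ext ω
  exact forall_congr' fun k => forall_congr' fun hk => by rw [h k hk]

/-- The covariate history `L̄(t)` as a random variable. -/
def Lhist (L : Fin K → Ω → 𝓛) (t : ℕ) (ω : Ω) : {k : Fin K // (k : ℕ) ≤ t} → 𝓛 :=
  fun k => L k ω

theorem Lhist_preimage_singleton (L : Fin K → Ω → 𝓛) (t : ℕ) (ω₀ : Ω) :
    Lhist L t ⁻¹' {Lhist L t ω₀} = Lpast L t (fun j => L j ω₀) := by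
  ext ω
  simp [Lhist, Lpast, funext_iff]

theorem factorsThrough_Lhist_of_le {β : Type*} {L : Fin K → Ω → 𝓛} {s t : ℕ} (hst : s ≤ t)
    {f : Ω → β} (hf : Function.FactorsThrough f (Lhist L s)) :
    Function.FactorsThrough f (Lhist L t) :=
  fun _ _ h => hf (funext fun k => congrFun h ⟨k, k.2.trans hst⟩)

variable [MeasurableSpace Ω]

theorem measurableSet_Apast {A : Fin K → Ω → Bool} (hA : ∀ k, Measurable (A k)) (t : ℕ)
    (c : Fin K → Bool) : MeasurableSet (Apast A t c) := by
  simp only [Apast, Set.ofPred_forall]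
  exact .iInter fun k => .iInter fun _ => hA k (measurableSet_singleton (c k))

theorem measurable_Lhist [MeasurableSpace 𝓛] {L : Fin K → Ω → 𝓛}
    (hL : ∀ k, Measurable (L k)) (t : ℕ) : Measurable (Lhist L t) :=
  measurable_pi_lambda _ fun k => hL k

end Histories

noncomputable section Weights

variable {Ω : Type*} [MeasurableSpace Ω] {𝓛 : Type*} {K : ℕ}

/-- `P(A(k) = c(k) | L̄(k), Ā(k−1) = c̄(k−1))`, the denominator factor of the weights
along the regime `c`, evaluated at the covariate history of `ω`. -/
def propensity (P : Measure Ω) (A : Fin K → Ω → Bool) (L : Fin K → Ω → 𝓛)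
    (c : Fin K → Bool) (k : Fin K) (ω : Ω) : ℝ :=
  cP P {ω' | A k ω' = c k} (Lpast L (k : ℕ) (fun j => L j ω) ∩ Apast A (k : ℕ) c)

/-- `P(A(k) = c(k) | Ā(k−1) = c̄(k−1))`, the numerator factor of the weights. -/
def marginalPropensity (P : Measure Ω) (A : Fin K → Ω → Bool) (c : Fin K → Bool)
    (k : Fin K) : ℝ :=
  cP P {ω | A k ω = c k} (Apast A (k : ℕ) c)

def window (K s t : ℕ) : Finset (Fin K) :=
  univ.filter fun k : Fin K => s ≤ (k : ℕ) ∧ (k : ℕ) < t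

theorem window_self (K s : ℕ) : window K s s = ∅ := by
  ext k
  simp only [window, mem_filter, mem_univ, true_and, notMem_empty, iff_false]
  omega

theorem prod_window_succ {M : Type*} [CommMonoid M] (f : Fin K → M) {s t : ℕ} (hst : s ≤ t)
    (ht : t < K) : ∏ k ∈ window K s (t + 1), f k = f ⟨t, ht⟩ * ∏ k ∈ window K s t, f k := by
  have h : window K s (t + 1) = insert ⟨t, ht⟩ (window K s t) := by
    ext k
    simp only [window, mem_filter, mem_univ, true_and, mem_insert, Fin.ext_iff]
    omega
  rw [h, prod_insert (by simp [window])]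

theorem Wpsw_eq_of_mem_Apast (P : Measure Ω) (A : Fin K → Ω → Bool) (L : Fin K → Ω → 𝓛)
    (m : ℕ) {c : Fin K → Bool} {ω : Ω} (hω : ω ∈ Apast A K c) :
    Wpsw P A L m ω = ∏ k ∈ window K (K - m) K,
      marginalPropensity P A c k / propensity P A L c k ω := by
  have hwindow : window K (K - m) K = univ.filter fun k : Fin K => K - m ≤ (k : ℕ) :=
    filter_congr fun k _ => and_iff_left k.isLt
  obtain rfl : (fun j => A j ω) = c := funext fun j => hω j j.isLt
  rw [hwindow]
  rfl

theorem factorsThrough_propensity (P : Measure Ω) (A : Fin K → Ω → Bool)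
    (L : Fin K → Ω → 𝓛) (c : Fin K → Bool) (k : Fin K) :
    Function.FactorsThrough (propensity P A L c k) (Lhist L k) :=
  fun ω ω' h => by
    simp only [propensity]
    rw [Lpast_congr L (l' := fun j => L j ω') fun j hj => congrFun h ⟨j, hj⟩]

theorem Wpsw_mul_indicators_eq_indicator (P : Measure Ω) (A : Fin K → Ω → Bool)
    (L : Fin K → Ω → 𝓛) (m : ℕ) {E F : Set Ω} {c : Fin K → Bool}
    (hEF : E ∩ F = Apast A K c) (Y : Set Ω) (ω : Ω) :
    Wpsw P A L m ω * (if ω ∈ Y then (1 : ℝ) else 0) * (if ω ∈ E then (1 : ℝ) else 0) *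
        (if ω ∈ F then (1 : ℝ) else 0) =
      (Y ∩ Apast A K c).indicator (fun ω => ∏ k ∈ window K (K - m) K,
        marginalPropensity P A c k / propensity P A L c k ω) ω := by
  by_cases hω : ω ∈ E ∩ F
  · rw [Wpsw_eq_of_mem_Apast P A L m (hEF ▸ hω), ← hEF]
    by_cases hY : ω ∈ Y <;> simp [hY, hω, hω.1, hω.2]
  · rw [← hEF, Set.indicator_of_notMem fun h => hω h.2]
    rw [Set.mem_inter_iff, not_and] at hω
    by_cases hE : ω ∈ E <;> simp [hE, hω]

theorem prod_marginalPropensity_mul_toReal (P : Measure Ω) [IsFiniteMeasure P]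
    (A : Fin K → Ω → Bool) (c : Fin K → Bool) {s t : ℕ} (hst : s ≤ t) (htK : t ≤ K) :
    (∏ k ∈ window K s t, marginalPropensity P A c k) * (P (Apast A s c)).toReal =
      (P (Apast A t c)).toReal := by
  induction t, hst using Nat.le_induction with
  | base => simp [window_self]
  | succ t hst ih =>
    have ht : t < K := by omega
    rw [prod_window_succ _ hst ht, mul_assoc, ih ht.le, marginalPropensity, cP_mul_toReal,
      ← Apast_succ]

variable [MeasurableSpace 𝓛] [Fintype 𝓛] [MeasurableSingletonClass 𝓛] {P : Measure Ω}
  [IsFiniteMeasure P] {A : Fin K → Ω → Bool} {L : Fin K → Ω → 𝓛}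
  {Ypot : (Fin K → Bool) → Ω → ℝ}

theorem setIntegral_div_propensity (hL : ∀ k, Measurable (L k)) (hA2 : A2ok P A L Ypot)
    (hA3 : A3ok P A L) (a : Fin K → Bool) {B : Set ℝ} (hB : MeasurableSet B)
    (c : Fin K → Bool) (t : Fin K) {H : Ω → ℝ}
    (hH : Function.FactorsThrough H (Lhist L (t : ℕ))) :
    ∫ ω in {ω | Ypot a ω ∈ B} ∩ ({ω | A t ω = c t} ∩ Apast A t c),
        H ω / propensity P A L c t ω ∂P =
      ∫ ω in {ω | Ypot a ω ∈ B} ∩ Apast A t c, H ω ∂P := by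
  have hHD : Function.FactorsThrough (fun ω => H ω / propensity P A L c t ω) (Lhist L t) :=
    fun ω ω' h => by simp only [hH h, factorsThrough_propensity P A L c t h]
  rw [setIntegral_eq_sum_of_factorsThrough P (measurable_Lhist hL t) hHD,
    setIntegral_eq_sum_of_factorsThrough P (measurable_Lhist hL t) hH]
  refine sum_congr rfl fun v _ => ?_
  by_cases hv : ∃ ω₀, Lhist L t ω₀ = v
  · obtain ⟨ω₀, rfl⟩ := hv
    rw [hHD.extend_apply, hH.extend_apply, Lhist_preimage_singleton]
    have hcancel := toReal_measure_inter_div_cP P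
      (hA2 t a B hB (c t) (fun j => L j ω₀) c) (hA3 t (c t) (fun j => L j ω₀) c)
    rw [← propensity] at hcancel
    have hsets : ∀ Y E F Lp : Set Ω, Y ∩ (E ∩ F) ∩ Lp = Y ∩ E ∩ (Lp ∩ F) := fun _ _ _ _ => by
      ext; simp only [Set.mem_inter_iff]; tauto
    rw [hsets, Set.inter_assoc _ (Apast A t c), Set.inter_comm (Apast A t c), ← hcancel]
    ring
  · have hempty : Lhist L t ⁻¹' {v} = ∅ :=
      Set.eq_empty_of_forall_notMem fun ω hω => hv ⟨ω, hω⟩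
    simp [hempty]

theorem setIntegral_prod_inv_propensity (hL : ∀ k, Measurable (L k))
    (hA2 : A2ok P A L Ypot) (hA3 : A3ok P A L) (a : Fin K → Bool) {B : Set ℝ}
    (hB : MeasurableSet B) (c : Fin K → Bool) {s t : ℕ} (hst : s ≤ t) (htK : t ≤ K) :
    ∫ ω in {ω | Ypot a ω ∈ B} ∩ Apast A t c,
        ∏ k ∈ window K s t, (propensity P A L c k ω)⁻¹ ∂P =
      (P ({ω | Ypot a ω ∈ B} ∩ Apast A s c)).toReal := by
  induction t, hst using Nat.le_induction with
  | base => simp [window_self, measureReal_def]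
  | succ t hst ih =>
    have ht : t < K := by omega
    have hH : Function.FactorsThrough
        (fun ω => ∏ k ∈ window K s t, (propensity P A L c k ω)⁻¹) (Lhist L t) :=
      fun ω ω' h => prod_congr rfl fun k hk => by
        have hkt : (k : ℕ) ≤ t := (mem_filter.1 hk).2.2.le
        rw [factorsThrough_Lhist_of_le hkt (factorsThrough_propensity P A L c k) h]
    simp_rw [prod_window_succ _ hst ht, Apast_succ A c ht, mul_comm _ (∏ k ∈ window K s t, _),
      ← div_eq_mul_inv]
    rw [setIntegral_div_propensity hL hA2 hA3 a hB c ⟨t, ht⟩ hH]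
    exact ih ht.le

end Weights

section Regimes

variable {Ω : Type*} {K : ℕ} (A : Fin K → Ω → Bool) (m : ℕ)
  (b : {k : Fin K // (k : ℕ) < K - m} → Bool) (bs : Fin K → Bool)

theorem ApastV_eq_Apast_concatRegime :
    ApastV A m b = Apast A (K - m) (concatRegime m b bs) := by
  ext ω
  simp only [ApastV, Apast, concatRegime, Set.mem_ofPred_eq]
  exact ⟨fun h k hk => by rw [dif_pos hk]; exact h k hk,
    fun h k hk => by simpa [dif_pos hk] using h k hk⟩

theorem EtrV_inter_ApastV_eq_Apast_concatRegime :
    EtrV A m bs ∩ ApastV A m b = Apast A K (concatRegime m b bs) := by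
  ext ω
  simp only [EtrV, ApastV, Apast, concatRegime, Set.mem_inter_iff, Set.mem_ofPred_eq]
  refine ⟨fun ⟨hE, hF⟩ k _ => ?_, fun h => ⟨fun k hk => ?_, fun k hk => ?_⟩⟩
  · split_ifs with hk
    exacts [hF k hk, hE k (by omega)]
  · simpa [dif_neg (show ¬(k : ℕ) < K - m by omega)] using h k k.isLt
  · simpa [dif_pos hk] using h k k.isLt

end Regimes

theorem psw_conditional_pseudopopulation_factorization_general
    {Ω : Type*} [MeasurableSpace Ω] {𝓛 : Type*} [MeasurableSpace 𝓛]
    [Fintype 𝓛] [MeasurableSingletonClass 𝓛]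
    (P : Measure Ω) [IsProbabilityMeasure P]
    {K m : ℕ}
    (A : Fin K → Ω → Bool) (L : Fin K → Ω → 𝓛)
    (hA : ∀ k, Measurable (A k)) (hL : ∀ k, Measurable (L k))
    (Ypot : (Fin K → Bool) → Ω → ℝ)
    (hYpm : ∀ a, Measurable (Ypot a))
    (hA2 : A2ok P A L Ypot) (hA3 : A3ok P A L) :
    ∀ b : {k : Fin K // (k : ℕ) < K - m} → Bool, 0 < P (ApastV A m b) →
    ∀ (as bs : Fin K → Bool) (B : Set ℝ), MeasurableSet B →
      (∫ ω, Wpsw P A L m ω *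
          (if Ypot (concatRegime m b as) ω ∈ B then (1 : ℝ) else 0) *
          (if ω ∈ EtrV A m bs then (1 : ℝ) else 0) *
          (if ω ∈ ApastV A m b then (1 : ℝ) else 0) ∂P) =
        cP P {ω | Ypot (concatRegime m b as) ω ∈ B} (ApastV A m b) *
          cP P (EtrV A m bs) (ApastV A m b) * (P (ApastV A m b)).toReal := by
  intro b _ as bs B hB
  set c := concatRegime m b bs
  set Y := {ω | Ypot (concatRegime m b as) ω ∈ B}
  have hregime := EtrV_inter_ApastV_eq_Apast_concatRegime A m b bs
  calc _ = ∫ ω, (Y ∩ Apast A K c).indicator (fun ω => ∏ k ∈ window K (K - m) K,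
          marginalPropensity P A c k / propensity P A L c k ω) ω ∂P :=
        integral_congr_ae (.of_forall (Wpsw_mul_indicators_eq_indicator P A L m hregime Y))
    _ = ∫ ω in Y ∩ Apast A K c,
        ∏ k ∈ window K (K - m) K, marginalPropensity P A c k / propensity P A L c k ω ∂P :=
        integral_indicator ((hYpm _ hB).inter (measurableSet_Apast hA K c))
    _ = (∏ k ∈ window K (K - m) K, marginalPropensity P A c k) * ∫ ω in Y ∩ Apast A K c,
        ∏ k ∈ window K (K - m) K, (propensity P A L c k ω)⁻¹ ∂P := by
        simp_rw [prod_div_distrib, div_eq_mul_inv, prod_inv_distrib]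
        exact integral_const_mul _ _
    _ = (∏ k ∈ window K (K - m) K, marginalPropensity P A c k) *
        (P (Y ∩ Apast A (K - m) c)).toReal := by
        rw [setIntegral_prod_inv_propensity hL hA2 hA3 _ hB c (Nat.sub_le K m) le_rfl]
    _ = _ := by
        rw [mul_assoc, cP_mul_toReal, hregime, ApastV_eq_Apast_concatRegime A m b bs,
          ← prod_marginalPropensity_mul_toReal P A c (Nat.sub_le K m) le_rfl,
          ← cP_mul_toReal P Y]
        ring

/-- Conditional pseudo-population factorization for partial stabilized weights
(equation (B.4.1)): under (A2) and (A3), after weighting by `W_psw^(m)`, the potential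
outcome `Y^{(b̄,a̲)}` and the recent treatment history `A̲(K−m)` are conditionally
independent given the past treatment history `Ā(K−m−1) = b̄`, with the original
conditional marginal distributions. -/
theorem psw_conditional_pseudopopulation_factorization
    {Ω : Type*} [MeasurableSpace Ω] {𝓛 : Type*} [MeasurableSpace 𝓛]
    [Fintype 𝓛] [Nonempty 𝓛] [MeasurableSingletonClass 𝓛]
    (P : Measure Ω) [IsProbabilityMeasure P]
    {K m : ℕ} (hK : 1 ≤ K) (hm1 : 1 ≤ m) (hmK : m ≤ K)
    (A : Fin K → Ω → Bool) (L : Fin K → Ω → 𝓛)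
    (hA : ∀ k, Measurable (A k)) (hL : ∀ k, Measurable (L k))
    (Ypot : (Fin K → Bool) → Ω → ℝ)
    (hYpm : ∀ a, Measurable (Ypot a)) (hYpi : ∀ a, Integrable (Ypot a) P)
    (hA2 : A2ok P A L Ypot) (hA3 : A3ok P A L) :
    ∀ b : {k : Fin K // (k : ℕ) < K - m} → Bool, 0 < P (ApastV A m b) →
    ∀ (as bs : Fin K → Bool) (B : Set ℝ), MeasurableSet B →
      (∫ ω, Wpsw P A L m ω *
          (if Ypot (concatRegime m b as) ω ∈ B then (1 : ℝ) else 0) *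
          (if ω ∈ EtrV A m bs then (1 : ℝ) else 0) *
          (if ω ∈ ApastV A m b then (1 : ℝ) else 0) ∂P) =
        cP P {ω | Ypot (concatRegime m b as) ω ∈ B} (ApastV A m b) *
          cP P (EtrV A m bs) (ApastV A m b) * (P (ApastV A m b)).toReal :=
  psw_conditional_pseudopopulation_factorization_general P A L hA hL Ypot hYpm hA2 hA3

end MSMPaper
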